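/- arXiv:1005.0291 — 3 statements merged into one kernel-verified Lean document; each statement's English description precedes it below -/
import Mathlib

section
/- Let g : A × B → Γ be a function between finite sets. For each a ∈ A let g_a : B → Γ be defined by g_a(b) = g(a,b), and suppose |range(g_a)| ≤ V₂ for all a ∈ A and |range(g_b)| ≤ V₁ for all b ∈ B (where g_b(a) = g(a,b)). Then for any pair (J,K) of independent random variables on A × B, the entropy satisfies H(g(J,K)) ≤ log V₁ + log V₂. -/
/-!
Let `G = g(J, K)`. Submodularity of entropy, `I(J; K | G) ≥ 0`, gives
`H(G) ≤ H(G, K) + H(G, J) - H(G, J, K)`. Since `(J, K)` is recovered from `(G, J, K)` and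
`J`, `K` are independent, `H(G, J, K) = H(J) + H(K)`, while given `K` (resp. `J`) the variable
`G` takes at most `V₁` (resp. `V₂`) values, so `H(G, K) ≤ H(K) + log V₁` and
`H(G, J) ≤ H(J) + log V₂`.
-/

noncomputable section

open Real

/-- Probability that the random variable `X` takes value `a` under pmf `μ`. -/
def pr {Ω α : Type*} [Fintype Ω] [DecidableEq α] (μ : Ω → ℝ) (X : Ω → α) (a : α) : ℝ :=
  ∑ ω, if X ω = a then μ ω else 0

/-- Shannon entropy (base 2) of a discrete random variable. -/
def ent {Ω α : Type*} [Fintype Ω] [Fintype α] [DecidableEq α] (μ : Ω → ℝ) (X : Ω → α) : ℝ :=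
  -∑ a, pr μ X a * Real.logb 2 (pr μ X a)

/-- Conditional entropy H(X|Y). -/
def condEnt {Ω α β : Type*} [Fintype Ω] [Fintype α] [Fintype β] [DecidableEq α] [DecidableEq β]
    (μ : Ω → ℝ) (X : Ω → α) (Y : Ω → β) : ℝ :=
  ent μ (fun ω => (X ω, Y ω)) - ent μ Y

/-- Mutual information I(X;Y). -/
def mutInfo {Ω α β : Type*} [Fintype Ω] [Fintype α] [Fintype β] [DecidableEq α] [DecidableEq β]
    (μ : Ω → ℝ) (X : Ω → α) (Y : Ω → β) : ℝ :=
  ent μ X + ent μ Y - ent μ (fun ω => (X ω, Y ω))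

/-- Conditional mutual information I(X;Y|Z). -/
def condMutInfo {Ω α β γ : Type*} [Fintype Ω] [Fintype α] [Fintype β] [Fintype γ]
    [DecidableEq α] [DecidableEq β] [DecidableEq γ]
    (μ : Ω → ℝ) (X : Ω → α) (Y : Ω → β) (Z : Ω → γ) : ℝ :=
  ent μ (fun ω => (X ω, Z ω)) + ent μ (fun ω => (Y ω, Z ω))
    - ent μ (fun ω => (X ω, Y ω, Z ω)) - ent μ Z

/-- `μ` is a probability mass function on the finite sample space `Ω`. -/
def IsPMF {Ω : Type*} [Fintype Ω] (μ : Ω → ℝ) : Prop :=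
  (∀ ω, 0 ≤ μ ω) ∧ ∑ ω, μ ω = 1

open Finset

section Entropy

variable {Ω α β γ : Type*} [Fintype Ω] [DecidableEq α] [DecidableEq β] [DecidableEq γ]
  {μ : Ω → ℝ}

lemma sum_pr_mul [Fintype α] (X : Ω → α) (f : α → ℝ) :
    ∑ a, pr μ X a * f a = ∑ ω, μ ω * f (X ω) := by
  simp only [pr, sum_mul, ite_mul, zero_mul]
  rw [sum_comm]
  simp

lemma sum_pr [Fintype α] (hμ : IsPMF μ) (X : Ω → α) : ∑ a, pr μ X a = 1 := by
  simpa [hμ.2] using sum_pr_mul (μ := μ) X (fun _ => 1)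

lemma pr_nonneg (hμ : IsPMF μ) (X : Ω → α) (a : α) : 0 ≤ pr μ X a :=
  sum_nonneg fun ω _ => by split <;> simp [hμ.1 ω]

lemma pr_pos (hμ : IsPMF μ) (X : Ω → α) {ω : Ω} (hω : μ ω ≠ 0) : 0 < pr μ X (X ω) := by
  have hle : μ ω ≤ pr μ X (X ω) := by
    simpa [pr] using single_le_sum (f := fun ω' => if X ω' = X ω then μ ω' else 0)
      (fun ω' _ => by split <;> simp [hμ.1 ω']) (mem_univ ω)
  exact (lt_of_le_of_ne (hμ.1 ω) (Ne.symm hω)).trans_le hle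

lemma sum_pr_pair [Fintype α] (X : Ω → α) (Y : Ω → β) (b : β) :
    ∑ a, pr μ (fun ω => (X ω, Y ω)) (a, b) = pr μ Y b := by
  simp only [pr]
  rw [sum_comm]
  refine sum_congr rfl fun ω _ => ?_
  by_cases h : Y ω = b <;> simp [Prod.ext_iff, h]

lemma sum_mul_congr_of_ne_zero {f f' : Ω → ℝ} (h : ∀ ω, μ ω ≠ 0 → f ω = f' ω) :
    ∑ ω, μ ω * f ω = ∑ ω, μ ω * f' ω :=
  sum_congr rfl fun ω _ => by by_cases hω : μ ω = 0 <;> simp [hω, h]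

lemma ent_eq_neg_sum [Fintype α] (X : Ω → α) :
    ent μ X = -∑ ω, μ ω * logb 2 (pr μ X (X ω)) := by
  rw [ent, sum_pr_mul X fun a => logb 2 (pr μ X a)]

lemma ent_le_cross_ent [Fintype α] (hμ : IsPMF μ) (X : Ω → α) (q : α → ℝ)
    (hq0 : ∀ a, 0 ≤ q a) (hq1 : ∑ a, q a ≤ 1) (hqX : ∀ ω, μ ω ≠ 0 → q (X ω) ≠ 0) :
    ent μ X ≤ -∑ ω, μ ω * logb 2 (q (X ω)) := by
  set p := pr μ X
  have hterm : ∀ ω, μ ω * (log (q (X ω)) - log (p (X ω))) ≤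
      μ ω * (q (X ω) / p (X ω)) - μ ω := by
    intro ω
    by_cases hω : μ ω = 0
    · simp [hω]
    have hp := pr_pos hμ X hω
    have hq := lt_of_le_of_ne (hq0 _) (hqX ω hω).symm
    rw [← Real.log_div hq.ne' hp.ne', ← mul_sub_one]
    exact mul_le_mul_of_nonneg_left (Real.log_le_sub_one_of_pos (div_pos hq hp)) (hμ.1 ω)
  have hratio : ∑ ω, μ ω * (q (X ω) / p (X ω)) ≤ 1 :=
    calc ∑ ω, μ ω * (q (X ω) / p (X ω)) = ∑ a, p a * (q a / p a) :=
          (sum_pr_mul X fun a => q a / p a).symm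
      _ ≤ ∑ a, q a := sum_le_sum fun a _ => by
          rcases eq_or_ne (p a) 0 with h | h
          · simp [h, hq0 a]
          · rw [mul_div_cancel₀ _ h]
      _ ≤ 1 := hq1
  have hgap : ∑ ω, μ ω * (log (q (X ω)) - log (p (X ω))) ≤ 0 := by
    have := sum_le_sum fun ω (_ : ω ∈ univ) => hterm ω
    rw [sum_sub_distrib, hμ.2] at this
    linarith
  rw [ent_eq_neg_sum, neg_le_neg_iff]
  simp only [Real.logb, mul_div_assoc', ← sum_div]
  rw [div_le_div_iff_of_pos_right (Real.log_pos one_lt_two)]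
  simpa only [mul_sub, sum_sub_distrib, sub_nonpos] using hgap

lemma ent_comp_injective [Fintype α] [Fintype β] (X : Ω → α) {i : α → β}
    (hi : Function.Injective i) : ent μ (fun ω => i (X ω)) = ent μ X := by
  have hpr : ∀ a, pr μ (fun ω => i (X ω)) (i a) = pr μ X a := fun a =>
    sum_congr rfl fun ω _ => by simp [hi.eq_iff]
  simp only [ent_eq_neg_sum, hpr]

lemma ent_pair_comm [Fintype α] [Fintype β] (X : Ω → α) (Y : Ω → β) :
    ent μ (fun ω => (X ω, Y ω)) = ent μ (fun ω => (Y ω, X ω)) :=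
  (ent_comp_injective (fun ω => (X ω, Y ω)) Prod.swap_injective).symm

lemma mutInfo_eq_zero_of_indep [Fintype α] [Fintype β] (hμ : IsPMF μ) (X : Ω → α)
    (Y : Ω → β) (hind : ∀ a b, pr μ (fun ω => (X ω, Y ω)) (a, b) = pr μ X a * pr μ Y b) :
    mutInfo μ X Y = 0 := by
  have hpair : ent μ (fun ω => (X ω, Y ω)) = ent μ X + ent μ Y := by
    simp only [ent_eq_neg_sum, hind, ← neg_add, ← sum_add_distrib, ← mul_add]
    congr 1
    exact sum_mul_congr_of_ne_zero fun ω hω =>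
      Real.logb_mul (pr_pos hμ X hω).ne' (pr_pos hμ Y hω).ne'
  rw [mutInfo, hpair, sub_self]

lemma condEnt_le_logb [Fintype α] [Fintype β] (hμ : IsPMF μ) (X : Ω → α) (Y : Ω → β)
    (S : β → Finset α) (V : ℕ) (hV : ∀ b, #(S b) ≤ V) (hXY : ∀ ω, X ω ∈ S (Y ω)) :
    condEnt μ X Y ≤ logb 2 V := by
  set q : α × β → ℝ := fun x => if x.1 ∈ S x.2 then pr μ Y x.2 / V else 0
  have hq0 : ∀ x, 0 ≤ q x := fun x => by
    simp only [q]; split <;> positivity [pr_nonneg hμ Y x.2]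
  have hq1 : ∑ x, q x ≤ 1 := by
    calc ∑ x, q x = ∑ b, #(S b) * (pr μ Y b / V) := by
          rw [Fintype.sum_prod_type_right]
          simp [q, sum_ite_mem]
      _ ≤ ∑ b, pr μ Y b := sum_le_sum fun b _ => by
          rcases Nat.eq_zero_or_pos V with hV0 | hV0
          · simp [hV0, pr_nonneg hμ Y b]
          · rw [mul_div_left_comm]
            refine mul_le_of_le_one_right (pr_nonneg hμ Y b) ?_
            exact div_le_one_of_le₀ (by exact_mod_cast hV b) (by positivity)
      _ = 1 := sum_pr hμ Y
  have hV0 : ∀ ω : Ω, (0 : ℝ) < V := fun ω => by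
    exact_mod_cast (card_pos.mpr ⟨X ω, hXY ω⟩).trans_le (hV (Y ω))
  have hqXY : ∀ ω, q (X ω, Y ω) = pr μ Y (Y ω) / V := fun ω => if_pos (hXY ω)
  have hcross := ent_le_cross_ent hμ (fun ω => (X ω, Y ω)) q hq0 hq1 fun ω hω => by
    rw [hqXY ω]; exact (div_pos (pr_pos hμ Y hω) (hV0 ω)).ne'
  have hcross_eq : -∑ ω, μ ω * logb 2 (q (X ω, Y ω)) = ent μ Y + logb 2 V := by
    rw [sum_mul_congr_of_ne_zero fun ω hω => by
      rw [hqXY ω, Real.logb_div (pr_pos hμ Y hω).ne' (hV0 ω).ne']]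
    simp only [mul_sub, sum_sub_distrib, ← sum_mul, hμ.2, ent_eq_neg_sum Y]
    ring
  rw [condEnt]
  linarith

lemma condMutInfo_nonneg [Fintype α] [Fintype β] [Fintype γ] (hμ : IsPMF μ) (X : Ω → α)
    (Y : Ω → β) (Z : Ω → γ) : 0 ≤ condMutInfo μ X Y Z := by
  set pxz := pr μ (fun ω => (X ω, Z ω))
  set pyz := pr μ (fun ω => (Y ω, Z ω))
  set pz := pr μ Z
  set q : α × β × γ → ℝ := fun x => pxz (x.1, x.2.2) * pyz (x.2.1, x.2.2) / pz x.2.2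
  have hq0 : ∀ x, 0 ≤ q x := fun x => by
    have := pr_nonneg hμ (fun ω => (X ω, Z ω)) (x.1, x.2.2)
    have := pr_nonneg hμ (fun ω => (Y ω, Z ω)) (x.2.1, x.2.2)
    have := pr_nonneg hμ Z x.2.2
    positivity
  have hq1 : ∑ x, q x ≤ 1 := by
    calc ∑ x, q x = ∑ c, (∑ a, pxz (a, c)) * (∑ b, pyz (b, c)) / pz c := by
          simp only [Fintype.sum_prod_type, sum_mul_sum, sum_div, q]
          exact (sum_comm.trans (sum_congr rfl fun _ _ => sum_comm)).symm
      _ = ∑ c, pz c := by simp only [sum_pr_pair, pxz, pyz, pz, mul_self_div_self]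
      _ ≤ 1 := (sum_pr hμ Z).le
  have hpos : ∀ ω, μ ω ≠ 0 →
      0 < pxz (X ω, Z ω) ∧ 0 < pyz (Y ω, Z ω) ∧ 0 < pz (Z ω) := fun ω hω =>
    ⟨pr_pos hμ (fun ω => (X ω, Z ω)) hω, pr_pos hμ (fun ω => (Y ω, Z ω)) hω, pr_pos hμ Z hω⟩
  have hcross := ent_le_cross_ent hμ (fun ω => (X ω, Y ω, Z ω)) q hq0 hq1 fun ω hω => by
    obtain ⟨h1, h2, h3⟩ := hpos ω hω
    exact (div_pos (mul_pos h1 h2) h3).ne'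
  have hcross_eq : -∑ ω, μ ω * logb 2 (q (X ω, Y ω, Z ω)) =
      ent μ (fun ω => (X ω, Z ω)) + ent μ (fun ω => (Y ω, Z ω)) - ent μ Z := by
    rw [sum_mul_congr_of_ne_zero fun ω hω => by
      obtain ⟨h1, h2, h3⟩ := hpos ω hω
      rw [Real.logb_div (mul_pos h1 h2).ne' h3.ne', Real.logb_mul h1.ne' h2.ne']]
    simp only [mul_sub, mul_add, sum_sub_distrib, sum_add_distrib, ent_eq_neg_sum]
    ring
  rw [condMutInfo]
  linarith

end Entropy

theorem stmt5_general {Ω A B Γ : Type*} [Fintype Ω] [Fintype A] [Fintype B] [Fintype Γ]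
    [DecidableEq A] [DecidableEq B] [DecidableEq Γ]
    (μ : Ω → ℝ) (hμ : IsPMF μ) (g : A → B → Γ) (J : Ω → A) (K : Ω → B)
    (V₁ V₂ : ℕ)
    (hV₂ : ∀ a, (Finset.univ.image (fun b => g a b)).card ≤ V₂)
    (hV₁ : ∀ b, (Finset.univ.image (fun a => g a b)).card ≤ V₁)
    (hind : ∀ a b, pr μ (fun ω => (J ω, K ω)) (a, b) = pr μ J a * pr μ K b) :
    ent μ (fun ω => g (J ω) (K ω)) ≤ Real.logb 2 V₁ + Real.logb 2 V₂ := by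
  let G := fun ω => g (J ω) (K ω)
  have hsub := condMutInfo_nonneg hμ K J G
  have hGK := condEnt_le_logb hμ G K (fun b => univ.image (g · b)) V₁ hV₁
    fun ω => mem_image_of_mem _ (mem_univ _)
  have hGJ := condEnt_le_logb hμ G J (fun a => univ.image (g a)) V₂ hV₂
    fun ω => mem_image_of_mem _ (mem_univ _)
  have hrecover : ent μ (fun ω => (K ω, J ω, G ω)) = ent μ (fun ω => (J ω, K ω)) :=
    ent_comp_injective (fun ω => (J ω, K ω)) (i := fun x => (x.2, x.1, g x.1 x.2))
      fun x y h => by simp only [Prod.mk.injEq] at h; exact Prod.ext h.2.1 h.1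
  have hindep := mutInfo_eq_zero_of_indep hμ J K hind
  rw [condMutInfo, ent_pair_comm K, ent_pair_comm J, hrecover] at hsub
  rw [condEnt] at hGK hGJ
  rw [mutInfo] at hindep
  linarith

/-- If every row-section of g has range at most V₂ and every column-section at most V₁,
then for independent J, K: H(g(J,K)) ≤ log V₁ + log V₂. -/
theorem stmt5 {Ω A B Γ : Type*} [Fintype Ω] [Fintype A] [Fintype B] [Fintype Γ]
    [DecidableEq A] [DecidableEq B] [DecidableEq Γ] [Nonempty A] [Nonempty B]
    (μ : Ω → ℝ) (hμ : IsPMF μ) (g : A → B → Γ) (J : Ω → A) (K : Ω → B)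
    (V₁ V₂ : ℕ)
    (hV₂ : ∀ a, (Finset.univ.image (fun b => g a b)).card ≤ V₂)
    (hV₁ : ∀ b, (Finset.univ.image (fun a => g a b)).card ≤ V₁)
    (hind : ∀ a b, pr μ (fun ω => (J ω, K ω)) (a, b) = pr μ J a * pr μ K b) :
    ent μ (fun ω => g (J ω) (K ω)) ≤ Real.logb 2 V₁ + Real.logb 2 V₂ :=
  stmt5_general μ hμ g J K V₁ V₂ hV₂ hV₁ hind
end
end

section
/- For every integer N > 2|Z| there exists a finite set W_N of stochastic matrices from X×Y to Z whose entries are multiples of a fixed quantization step, with |W_N| ≤ (2N·c + 1)^{|X||Y||Z|} for a constant c, and a map f : W → W_N such that for every stochastic matrix W ∈ W: (i) |W(z|x,y) - f(W)(z|x,y)| ≤ |Z|/N for all x,y,z, and (ii) W(z|x,y) ≤ exp(2|Z|²/N)·f(W)(z|x,y) for all x,y,z. -/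
/-!
Each row `p` of `W` is first mixed with the uniform distribution,
`s = (1 - ε) p + ε u` with `ε = |Z| / (2N)`, so that `s ≥ (1 - ε) p + 1/(2N)`; then `D s`
(`D = 2Nc ≥ 2N`) is rounded to integers with the correct total `D` by flooring all
coordinates but one and giving the remainder to the last. Rounding moves each coordinate of
`s` by at most `|Z| / D`, so the quantized row stays within `2ε = |Z|/N` of `p`, and it
loses at most `1/D ≤ 1/(2N)` from below, so it dominates `(1 - ε) p`; finally
`1 ≤ e^{2ε} (1 - ε)` for `ε ≤ 1/2`.
-/

open Finset Real

theorem nonempty_of_mem_stdSimplex {Z : Type*} [Fintype Z] {s : Z → ℝ}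
    (hs : s ∈ stdSimplex ℝ Z) : Nonempty Z := by
  by_contra h
  simp [not_nonempty_iff.mp h, stdSimplex_of_isEmpty_index] at hs

theorem exists_mem_stdSimplex_eq_mix_uniform {Z : Type*} [Fintype Z] [Nonempty Z] {p : Z → ℝ}
    (hp : p ∈ stdSimplex ℝ Z) {ε : ℝ} (h0 : 0 ≤ ε) (h1 : ε ≤ 1) :
    ∃ s ∈ stdSimplex ℝ Z, ∀ z, s z = (1 - ε) * p z + ε / Fintype.card Z :=
  ⟨(1 - ε) • p + ε • (stdSimplex.barycenter : stdSimplex ℝ Z).val,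
    convex_stdSimplex ℝ Z hp stdSimplex.barycenter.2 (by linarith) h0 (by ring),
    fun z => by simp [div_eq_mul_inv]⟩

theorem exists_nat_sum_eq_of_mem_stdSimplex {Z : Type*} [Fintype Z] {s : Z → ℝ}
    (hs : s ∈ stdSimplex ℝ Z) (D : ℕ) :
    ∃ q : Z → ℕ, ∑ z, q z = D ∧
      ∀ z, D * s z - 1 ≤ q z ∧ (q z : ℝ) ≤ D * s z + (Fintype.card Z - 1) := by
  classical
  obtain ⟨z₀⟩ := nonempty_of_mem_stdSimplex hs
  have hm : 0 < Fintype.card Z := Fintype.card_pos_iff.mpr ⟨z₀⟩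
  set F : Z → ℕ := fun z => ⌊D * s z⌋₊
  set K := ∑ z ∈ univ.erase z₀, F z
  have hF_le (z : Z) : (F z : ℝ) ≤ D * s z := Nat.floor_le (mul_nonneg D.cast_nonneg (hs.1 z))
  have hF_gt (z : Z) : D * s z - 1 < F z := by linarith [Nat.lt_floor_add_one (D * s z)]
  have hs_rest : ∑ z ∈ univ.erase z₀, s z = 1 - s z₀ := by
    rw [sum_erase_eq_sub (mem_univ z₀), hs.2]
  have hK_le : (K : ℝ) ≤ D * (1 - s z₀) := by
    rw [← hs_rest, mul_sum, Nat.cast_sum]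
    exact sum_le_sum fun z _ => hF_le z
  have hK_ge : D * (1 - s z₀) - (Fintype.card Z - 1) ≤ (K : ℝ) := by
    have hcard : ((univ.erase z₀).card : ℝ) = Fintype.card Z - 1 := by
      rw [card_erase_of_mem (mem_univ z₀), card_univ, Nat.cast_pred hm]
    rw [← hs_rest, mul_sum, ← hcard, card_eq_sum_ones, Nat.cast_sum, Nat.cast_sum,
      ← sum_sub_distrib]
    exact sum_le_sum fun z _ => by push_cast; linarith [hF_gt z]
  have hKD : K ≤ D := by
    have : (K : ℝ) ≤ D := hK_le.trans (by nlinarith [hs.1 z₀, (D.cast_nonneg : (0 : ℝ) ≤ D)])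
    exact_mod_cast this
  have hm' : (1 : ℝ) ≤ Fintype.card Z := Nat.one_le_cast.mpr hm
  refine ⟨Function.update F z₀ (D - K), ?_, fun z => ?_⟩
  · rw [sum_update_of_mem (mem_univ z₀), sdiff_singleton_eq_erase, Nat.sub_add_cancel hKD]
  · rcases eq_or_ne z z₀ with rfl | hz
    · rw [Function.update_self, Nat.cast_sub hKD]
      constructor <;> linarith
    · rw [Function.update_of_ne hz]
      exact ⟨(hF_gt z).le, by linarith [hF_le z]⟩

theorem one_le_exp_two_mul_mul_one_sub {ε : ℝ} (h0 : 0 ≤ ε) (h1 : ε ≤ 1 / 2) :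
    1 ≤ exp (2 * ε) * (1 - ε) := by
  nlinarith [mul_le_mul_of_nonneg_right (add_one_le_exp (2 * ε)) (by linarith : 0 ≤ 1 - ε)]

theorem exists_nat_approx_of_mem_stdSimplex {Z : Type*} [Fintype Z] {p : Z → ℝ}
    (hp : p ∈ stdSimplex ℝ Z) {N D : ℕ} (hN : Fintype.card Z ≤ N) (hD : 2 * N ≤ D) :
    ∃ q : Z → ℕ, ∑ z, q z = D ∧ ∀ z,
      |p z - q z / D| ≤ Fintype.card Z / N ∧ p z ≤ exp (Fintype.card Z / N) * (q z / D) := by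
  have := nonempty_of_mem_stdSimplex hp
  set m : ℝ := (Fintype.card Z : ℝ) with hm_def
  set ε := m / (2 * N) with hε_def
  have hm : 1 ≤ m := Nat.one_le_cast.mpr Fintype.card_pos
  have hmN : m ≤ N := Nat.cast_le.mpr hN
  have hN0 : (0 : ℝ) < N := by linarith
  have hDN : (2 * N : ℝ) ≤ D := by exact_mod_cast hD
  have hD0 : (0 : ℝ) < D := by linarith
  have hε0 : 0 ≤ ε := by positivity
  have hε1 : ε ≤ 1 / 2 := by rw [div_le_iff₀ (by positivity)]; linarith
  have h2ε : m / N = 2 * ε := by rw [hε_def]; field_simp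
  have hinvN : 1 / (2 * N) ≤ ε := div_le_div_of_nonneg_right hm (by positivity)
  have hmD : m / D ≤ ε := div_le_div_of_nonneg_left (by positivity) (by positivity) hDN
  obtain ⟨s, hs, hs_mix⟩ := exists_mem_stdSimplex_eq_mix_uniform hp hε0 (by linarith)
  have hs_apply (z : Z) : s z = (1 - ε) * p z + 1 / (2 * N) := by
    rw [hs_mix, ← hm_def, hε_def]
    field_simp
  obtain ⟨q, hq_sum, hq⟩ := exists_nat_sum_eq_of_mem_stdSimplex hs D
  refine ⟨q, hq_sum, fun z => ?_⟩
  have hp0 := hp.1 z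
  have hp1 := (mem_Icc_of_mem_stdSimplex hp z).2
  have h_lo : (1 - ε) * p z ≤ q z / D := by
    calc (1 - ε) * p z ≤ s z - 1 / D := by
          rw [hs_apply]; linarith [one_div_le_one_div_of_le (by positivity) hDN]
      _ = (D * s z - 1) / D := by field_simp
      _ ≤ q z / D := by gcongr; exact (hq z).1
  have h_hi : q z / D ≤ s z + ε := by
    calc (q z : ℝ) / D ≤ s z + m / D := by
          rw [div_le_iff₀ hD0, add_mul, div_mul_cancel₀ _ hD0.ne']; linarith [hq z]
      _ ≤ s z + ε := by gcongr
  rw [h2ε]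
  refine ⟨abs_le.mpr ⟨?_, ?_⟩, ?_⟩
  · linarith [hs_apply z, mul_nonneg hε0 hp0]
  · linarith [mul_le_of_le_one_right hε0 hp1]
  · calc p z ≤ exp (2 * ε) * (1 - ε) * p z :=
          le_mul_of_one_le_left hp0 (one_le_exp_two_mul_mul_one_sub hε0 hε1)
      _ ≤ exp (2 * ε) * (q z / D) := by rw [mul_assoc]; gcongr

theorem natCast_div_mem_stdSimplex {Z : Type*} [Fintype Z] {q : Z → ℕ} {D : ℕ}
    (hq : ∑ z, q z = D) (hD : 0 < D) : (fun z => (q z : ℝ) / D) ∈ stdSimplex ℝ Z :=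
  ⟨fun z => by positivity, by
    rw [← sum_div, ← Nat.cast_sum, hq, div_self (by positivity)]⟩

section GridMatrices

variable (X Y Z : Type*) [Fintype X] [Fintype Y] [Fintype Z]

open Classical in
noncomputable def gridMatrices (D : ℕ) : Finset (X → Y → Z → ℝ) :=
  univ.image fun κ : X → Y → Z → Fin (D + 1) => fun a b z => (κ a b z : ℝ) / D

theorem card_gridMatrices_le (D : ℕ) :
    #(gridMatrices X Y Z D) ≤ (D + 1) ^ (Fintype.card X * Fintype.card Y * Fintype.card Z) := by
  classical
  refine (card_image_le.trans_eq ?_)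
  simp only [card_univ, Fintype.card_fun, Fintype.card_fin, ← pow_mul]
  ring

variable {X Y Z}

theorem exists_natCast_div_of_mem_gridMatrices {D : ℕ} {V : X → Y → Z → ℝ}
    (hV : V ∈ gridMatrices X Y Z D) (a : X) (b : Y) (z : Z) : ∃ k : ℕ, V a b z = k / D := by
  classical
  obtain ⟨κ, -, rfl⟩ := mem_image.mp hV
  exact ⟨κ a b z, rfl⟩

theorem natCast_div_mem_gridMatrices {D : ℕ} {κ : X → Y → Z → ℕ} (hκ : ∀ a b z, κ a b z ≤ D) :
    (fun a b z => (κ a b z : ℝ) / D) ∈ gridMatrices X Y Z D := by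
  classical
  exact mem_image.mpr ⟨fun a b z => ⟨κ a b z, Nat.lt_succ_of_le (hκ a b z)⟩, mem_univ _, rfl⟩

end GridMatrices

/-- Channel quantization lemma: for N > 2|Z| there is a finite set W_N of stochastic
matrices with entries multiples of 1/(2Nc), of cardinality at most (2Nc+1)^{|X||Y||Z|},
and a map f into it approximating every stochastic matrix in sup-norm by |Z|/N and
satisfying the multiplicative bound W ≤ exp(2|Z|²/N)·f(W). -/
theorem stmt10 {X Y Z : Type*} [Fintype X] [Fintype Y] [Fintype Z]
    (c : ℕ) (hc : 0 < c) (N : ℕ) (hN : 2 * Fintype.card Z < N) :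
    ∃ WN : Finset (X → Y → Z → ℝ),
      (∀ V ∈ WN, (∀ a b, (∀ z, 0 ≤ V a b z) ∧ ∑ z, V a b z = 1) ∧
        ∀ a b z, ∃ k : ℕ, V a b z = (k : ℝ) / (2 * (N : ℝ) * c)) ∧
      WN.card ≤ (2 * N * c + 1) ^ (Fintype.card X * Fintype.card Y * Fintype.card Z) ∧
      ∃ f : (X → Y → Z → ℝ) → (X → Y → Z → ℝ),
        ∀ W : X → Y → Z → ℝ, (∀ a b, (∀ z, 0 ≤ W a b z) ∧ ∑ z, W a b z = 1) →
          f W ∈ WN ∧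
          (∀ a b z, |W a b z - f W a b z| ≤ (Fintype.card Z : ℝ) / N) ∧
          (∀ a b z, W a b z ≤ Real.exp (2 * (Fintype.card Z : ℝ) ^ 2 / N) * f W a b z) := by
  classical
  have hD : ((2 * N * c : ℕ) : ℝ) = 2 * N * c := by push_cast; ring
  have h2N : 2 * N ≤ 2 * N * c := Nat.le_mul_of_pos_right _ hc
  choose! q hq_sum hq using fun p (hp : p ∈ stdSimplex ℝ Z) =>
    exists_nat_approx_of_mem_stdSimplex hp (N := N) (by omega) h2N
  have hq_le {p} (hp : p ∈ stdSimplex ℝ Z) (z : Z) : q p z ≤ 2 * N * c :=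
    hq_sum p hp ▸ single_le_sum (fun _ _ => Nat.zero_le _) (mem_univ z)
  have hexp : exp (Fintype.card Z / N) ≤ exp (2 * (Fintype.card Z : ℝ) ^ 2 / N) := by
    gcongr
    exact_mod_cast (by nlinarith : Fintype.card Z ≤ 2 * Fintype.card Z ^ 2)
  refine ⟨(gridMatrices X Y Z (2 * N * c)).filter fun V => ∀ a b, V a b ∈ stdSimplex ℝ Z,
    fun V hV => ?_, ?_, fun W a b z => (q (W a b) z : ℝ) / (2 * N * c), fun W hW => ?_⟩
  · rw [mem_filter] at hV
    exact ⟨hV.2, by simpa only [hD] using exists_natCast_div_of_mem_gridMatrices hV.1⟩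
  · exact (card_filter_le _ _).trans (card_gridMatrices_le X Y Z _)
  · refine ⟨mem_filter.mpr ⟨?_, fun a b => ?_⟩, fun a b z => ?_, fun a b z => ?_⟩
    · simpa only [hD] using natCast_div_mem_gridMatrices fun a b => hq_le (hW a b)
    · simpa only [hD] using natCast_div_mem_stdSimplex (hq_sum _ (hW a b)) (by omega)
    · simpa only [hD] using ((hq _ (hW a b)) z).1
    · calc W a b z ≤ exp (Fintype.card Z / N) * (q (W a b) z / (2 * N * c)) := by
            simpa only [hD] using ((hq _ (hW a b)) z).2
        _ ≤ _ := mul_le_mul_of_nonneg_right hexp (by positivity)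
end

section
/- Let p be a probability distribution on a finite set X. There is a universal constant c > 0 such that for all n and all δ > 0, pⁿ((T^n_{p,δ})^c) ≤ (n+1)^{|X|} · 2^{-n·c·δ²}. -/
noncomputable section

/-- The type (empirical distribution) of a sequence. -/
def typeOf {X : Type*} [Fintype X] [DecidableEq X] {n : ℕ} (x : Fin n → X) (a : X) : ℝ :=
  ((Finset.univ.filter (fun i => x i = a)).card : ℝ) / n

/-- Shannon entropy (base 2) of a distribution on a finite set. -/
def Hd {X : Type*} [Fintype X] (p : X → ℝ) : ℝ := -∑ a, p a * Real.logb 2 (p a)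

/-- Conditional entropy H(W|p) = Σ_a p(a) H(W(·|a)). -/
def condH {X Y : Type*} [Fintype X] [Fintype Y] (p : X → ℝ) (W : X → Y → ℝ) : ℝ :=
  ∑ a, p a * (-∑ b, W a b * Real.logb 2 (W a b))

/-! For a fixed letter `a`, the count `n * typeOf x a` is a sum of `n` independent Bernoulli(`p a`)
variables, so the Chernoff bound with the estimate `1 - q + q eˢ ≤ exp (s q + s² / 2)` gives
`pⁿ(|typeOf x a - p a| > δ) ≤ 2 exp (-n δ² / 2)`. A sequence that uses a letter of probability zero
has weight zero, so a union bound over the letters bounds the bad set by `2 |X| exp (-n δ² / 2)`,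
and `2 |X| ≤ (n + 1)^|X|`. This is the claim with `c = 1 / (2 ln 2)`. -/

open Finset Real

theorem sum_filter_le_sum_sum_filter {ι α : Type*} (s : Finset ι) (t : Finset α) {f : α → ℝ}
    (hf : ∀ x ∈ t, 0 ≤ f x) {P : α → Prop} {Q : ι → α → Prop} [DecidablePred P]
    [∀ i, DecidablePred (Q i)] (h : ∀ x ∈ t, P x → f x ≠ 0 → ∃ i ∈ s, Q i x) :
    ∑ x ∈ t with P x, f x ≤ ∑ i ∈ s, ∑ x ∈ t with Q i x, f x := by
  have hQ : ∀ x ∈ t, ∀ i, 0 ≤ if Q i x then f x else 0 := fun x hx i =>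
    ite_nonneg (hf x hx) le_rfl
  simp only [sum_filter]
  rw [sum_comm]
  refine sum_le_sum fun x hx => ?_
  split_ifs with hP
  · by_cases hx0 : f x = 0
    · exact hx0 ▸ sum_nonneg fun i _ => hQ x hx i
    · obtain ⟨i, hi, hQi⟩ := h x hx hP hx0
      exact (if_pos hQi).symm.le.trans (single_le_sum (fun j _ => hQ x hx j) hi)
  · exact sum_nonneg fun i _ => hQ x hx i

theorem one_sub_add_mul_exp_le {q : ℝ} (hq0 : 0 ≤ q) (hq1 : q ≤ 1) (t : ℝ) :
    1 - q + q * exp t ≤ exp (t * q + t ^ 2 / 2) := by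
  have hconv : ∀ y, -1 ≤ y → y ≤ 1 →
      exp (t * y) ≤ (1 + y) / 2 * exp t + (1 - y) / 2 * exp (-t) := fun y hy₁ hy₂ => by
    have := convexOn_exp.2 (Set.mem_univ t) (Set.mem_univ (-t)) (by linarith : 0 ≤ (1 + y) / 2)
      (by linarith : 0 ≤ (1 - y) / 2) (by ring)
    simp only [smul_eq_mul] at this
    rwa [show t * y = (1 + y) / 2 * t + (1 - y) / 2 * -t by ring]
  -- average of the convexity bound over the mean-zero values `-q` and `1 - q`
  have hcosh : (1 - q) * exp (t * -q) + q * exp (t * (1 - q)) ≤ cosh t := by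
    rw [cosh_eq]
    nlinarith [mul_le_mul_of_nonneg_left (hconv (-q) (by linarith) (by linarith))
      (by linarith : 0 ≤ 1 - q), mul_le_mul_of_nonneg_left (hconv (1 - q) (by linarith)
      (by linarith)) hq0]
  calc 1 - q + q * exp t = exp (t * q) * ((1 - q) * exp (t * -q) + q * exp (t * (1 - q))) := by
        rw [show t * -q = -(t * q) by ring, show t * (1 - q) = t - t * q by ring, exp_neg,
          exp_sub]
        field_simp
    _ ≤ exp (t * q) * exp (t ^ 2 / 2) := by
        gcongr
        exact hcosh.trans (cosh_le_exp_half_sq t)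
    _ = exp (t * q + t ^ 2 / 2) := (exp_add _ _).symm

theorem sum_prod_filter_le_exp_neg_mul_pow {X : Type*} [Fintype X] {w : X → ℝ}
    (hw : ∀ v, 0 ≤ w v) (g : X → ℝ) (θ : ℝ) (n : ℕ) :
    ∑ x : Fin n → X with θ ≤ ∑ i, g (x i), ∏ i, w (x i) ≤
      exp (-θ) * (∑ v, w v * exp (g v)) ^ n := by
  have hprod : ∀ x : Fin n → X, 0 ≤ ∏ i, w (x i) := fun x => prod_nonneg fun i _ => hw _
  calc ∑ x : Fin n → X with θ ≤ ∑ i, g (x i), ∏ i, w (x i)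
      ≤ ∑ x : Fin n → X with θ ≤ ∑ i, g (x i), (∏ i, w (x i)) * exp (∑ i, g (x i) - θ) :=
        sum_le_sum fun x hx => le_mul_of_one_le_right (hprod x)
          (one_le_exp (sub_nonneg.2 (mem_filter.1 hx).2))
    _ ≤ ∑ x : Fin n → X, (∏ i, w (x i)) * exp (∑ i, g (x i) - θ) :=
        sum_le_sum_of_subset_of_nonneg (filter_subset _ _) fun x _ _ =>
          mul_nonneg (hprod x) (exp_pos _).le
    _ = exp (-θ) * ∑ x : Fin n → X, ∏ i, (w (x i) * exp (g (x i))) := by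
        rw [mul_sum]
        refine sum_congr rfl fun x _ => ?_
        rw [prod_mul_distrib, ← exp_sum, sub_eq_neg_add, exp_add]
        ring
    _ = exp (-θ) * (∑ v, w v * exp (g v)) ^ n := by rw [Fintype.sum_pow]

theorem two_mul_le_add_one_pow {n : ℕ} (hn : 1 ≤ n) (k : ℕ) : (2 * k : ℝ) ≤ (n + 1) ^ k := by
  have h : 2 * k ≤ 2 ^ k := by
    cases k with
    | zero => simp
    | succ k => rw [pow_succ]; have := k.lt_two_pow_self; omega
  calc (2 * k : ℝ) ≤ 2 ^ k := by exact_mod_cast h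
    _ ≤ (n + 1) ^ k := pow_le_pow_left₀ zero_le_two (by norm_cast; omega) k

section Types

variable {X : Type*} [Fintype X] [DecidableEq X]

theorem natCast_mul_typeOf {n : ℕ} (x : Fin n → X) (a : X) :
    n * typeOf x a = ∑ i, if x i = a then 1 else 0 := by
  rw [typeOf, sum_boole]
  rcases n.eq_zero_or_pos with rfl | hn
  · simp
  · field_simp

theorem typeOf_eq_zero_of_prod_ne_zero {p : X → ℝ} {n : ℕ} {x : Fin n → X}
    (hx : ∏ i, p (x i) ≠ 0) {a : X} (ha : p a = 0) : typeOf x a = 0 := by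
  rw [typeOf, filter_false_of_mem fun i _ hi => hx (prod_eq_zero (mem_univ i) (by rw [hi, ha]))]
  simp

variable {p : X → ℝ} (hp0 : ∀ a, 0 ≤ p a) (hp1 : ∑ a, p a = 1)
include hp0 hp1

theorem sum_prod_filter_mul_le_mul_typeOf_le (a : X) (n : ℕ) (s : ℝ) :
    ∑ x : Fin n → X with s * (p a + s) ≤ s * typeOf x a, ∏ i, p (x i) ≤
      exp (-(n * s ^ 2) / 2) := by
  have hpa1 : p a ≤ 1 := hp1 ▸ single_le_sum (fun b _ => hp0 b) (mem_univ a)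
  have hmgf : ∑ v, p v * exp (s * if v = a then 1 else 0) = 1 - p a + p a * exp s := by
    have hterm : ∀ v, p v * exp (s * if v = a then 1 else 0) =
        p v + if v = a then p a * (exp s - 1) else 0 := fun v => by
      split_ifs with hv
      · rw [hv]; ring_nf
      · simp
    rw [sum_congr rfl fun v _ => hterm v, sum_add_distrib, hp1, sum_ite_eq']
    simp only [mem_univ, if_true]
    ring
  calc ∑ x : Fin n → X with s * (p a + s) ≤ s * typeOf x a, ∏ i, p (x i)
      ≤ ∑ x : Fin n → X with n * s * (p a + s) ≤ ∑ i, s * if x i = a then 1 else 0,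
          ∏ i, p (x i) := by
        refine sum_le_sum_of_subset_of_nonneg (fun x hx => ?_)
          fun x _ _ => prod_nonneg fun i _ => hp0 _
        simp only [mem_filter, mem_univ, true_and] at hx ⊢
        rw [← mul_sum, ← natCast_mul_typeOf]
        nlinarith [(n.cast_nonneg : (0 : ℝ) ≤ n)]
    _ ≤ exp (-(n * s * (p a + s))) * (1 - p a + p a * exp s) ^ n := by
        rw [← hmgf]
        exact sum_prod_filter_le_exp_neg_mul_pow
          (g := fun v => s * if v = a then 1 else 0) hp0 _ n
    _ ≤ exp (-(n * s * (p a + s))) * exp (s * p a + s ^ 2 / 2) ^ n := by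
        gcongr
        · exact add_nonneg (by linarith) (mul_nonneg (hp0 a) (exp_pos s).le)
        · exact one_sub_add_mul_exp_le (hp0 a) hpa1 s
    _ = exp (-(n * s ^ 2) / 2) := by
        rw [← exp_nat_mul, ← exp_add]
        ring_nf

theorem sum_prod_filter_lt_abs_typeOf_sub_le (a : X) (n : ℕ) {δ : ℝ} (hδ : 0 ≤ δ) :
    ∑ x : Fin n → X with δ < |typeOf x a - p a|, ∏ i, p (x i) ≤
      2 * exp (-(n * δ ^ 2) / 2) := by
  -- the upper and lower tails are the events `s * (p a + s) ≤ s * typeOf x a` for `s = ±δ`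
  calc ∑ x : Fin n → X with δ < |typeOf x a - p a|, ∏ i, p (x i)
      ≤ ∑ s ∈ {δ, -δ}, ∑ x : Fin n → X with s * (p a + s) ≤ s * typeOf x a, ∏ i, p (x i) :=
        sum_filter_le_sum_sum_filter _ _ (fun x _ => prod_nonneg fun i _ => hp0 _)
          fun x _ hx _ => by
            rcases lt_abs.1 hx with h | h
            · exact ⟨δ, by simp, by nlinarith⟩
            · exact ⟨-δ, by simp, by nlinarith⟩
    _ ≤ ∑ s ∈ {δ, -δ}, exp (-(n * δ ^ 2) / 2) := sum_le_sum fun s hs => by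
        have hs2 : s ^ 2 = δ ^ 2 := by
          rcases mem_insert.1 hs with rfl | hs
          · rfl
          · rw [mem_singleton.1 hs, neg_sq]
        exact hs2 ▸ sum_prod_filter_mul_le_mul_typeOf_le hp0 hp1 a n s
    _ ≤ 2 * exp (-(n * δ ^ 2) / 2) := by
        rw [sum_const, nsmul_eq_mul]
        gcongr
        exact_mod_cast card_le_two

end Types

open scoped Classical in
/-- Exponential concentration of types: pⁿ((Tⁿ_{p,δ})ᶜ) ≤ (n+1)^{|X|} 2^{-ncδ²} for a
universal constant c > 0. -/
theorem stmt12 :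
    ∃ c : ℝ, 0 < c ∧
      ∀ (X : Type) [Fintype X] [DecidableEq X] (p : X → ℝ),
        ((∀ a, 0 ≤ p a) ∧ ∑ a, p a = 1) →
        ∀ (n : ℕ) (δ : ℝ), 0 < δ →
          ∑ x ∈ Finset.univ.filter (fun x : Fin n → X =>
              ¬ (∀ a, |typeOf x a - p a| ≤ δ ∧ (p a = 0 → typeOf x a = 0))),
            ∏ i, p (x i) ≤
          ((n : ℝ) + 1) ^ Fintype.card X * (2 : ℝ) ^ (-(n : ℝ) * c * δ ^ 2) := by
  refine ⟨1 / (2 * log 2), by positivity, ?_⟩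
  rintro X _ _ p ⟨hp0, hp1⟩ n δ hδ
  have hrate : (2 : ℝ) ^ (-(n : ℝ) * (1 / (2 * log 2)) * δ ^ 2) = exp (-(n * δ ^ 2) / 2) := by
    rw [rpow_def_of_pos two_pos]
    field_simp
  have hw : ∀ x : Fin n → X, 0 ≤ ∏ i, p (x i) := fun x => prod_nonneg fun i _ => hp0 _
  rw [hrate]
  rcases n.eq_zero_or_pos with rfl | hn
  · calc _ ≤ ∑ x : Fin 0 → X, ∏ i, p (x i) :=
          sum_le_sum_of_subset_of_nonneg (filter_subset _ _) fun x _ _ => hw x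
      _ = _ := by simp
  calc _ ≤ ∑ a, ∑ x : Fin n → X with δ < |typeOf x a - p a|, ∏ i, p (x i) :=
        sum_filter_le_sum_sum_filter _ _ (fun x _ => hw x) fun x _ hx hx0 => by
          obtain ⟨a, ha⟩ := not_forall.1 hx
          exact ⟨a, mem_univ a, lt_of_not_ge fun hclose =>
            ha ⟨hclose, typeOf_eq_zero_of_prod_ne_zero hx0⟩⟩
    _ ≤ ∑ _a : X, 2 * exp (-(n * δ ^ 2) / 2) :=
        sum_le_sum fun a _ => sum_prod_filter_lt_abs_typeOf_sub_le hp0 hp1 a n hδ.le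
    _ = 2 * Fintype.card X * exp (-(n * δ ^ 2) / 2) := by
        rw [sum_const, card_univ, nsmul_eq_mul]
        ring
    _ ≤ _ := by
        gcongr
        exact two_mul_le_add_one_pow hn _
end
end
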